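/- Let p satisfy p(0)>0, p(0)+p(1)<1, μ(p)<1, with generating function g having radius of convergence ρ ∈ (1,∞) and g'(ρ) < 1 (hence g(ρ) < ρ). Let Y have law p_{ℕ,ρ}, i.e., E[f(Y)] = E[f(X)ρ^X]/g(ρ). Then p is non-generic for A ⊆ ℕ (with p(A)>0) if and only if E[Y | Y∈A] < (ρ − ρg'(ρ))/(ρ − g(ρ)). In particular, p is non-generic for {0}, and p is generic for {k} whenever p(k)>0 and k/ρ ≥ (ρ − ρg'(ρ))/(ρ − g(ρ)). -/

import Mathlib

open scoped Classical

/-- The normalizing constant `c_A(θ)`. -/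
noncomputable def cA (p : ℕ → ℝ) (A : Set ℕ) (θ : ℝ) : ℝ :=
  (θ - ∑' k : ℕ, (Aᶜ).indicator (fun k => θ ^ k * p k) k) /
    (θ * ∑' k : ℕ, A.indicator (fun k => θ ^ k * p k) k)

/-- The modified offspring distribution `p_{A,θ}`. -/
noncomputable def pMod (p : ℕ → ℝ) (A : Set ℕ) (θ : ℝ) : ℕ → ℝ :=
  fun k => if k ∈ A then cA p A θ * θ ^ k * p k else θ ^ ((k : ℤ) - 1) * p k

/-- `I_A`: the set of `θ > 0` for which `p_{A,θ}` is a probability distribution. -/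
def IA (p : ℕ → ℝ) (A : Set ℕ) : Set ℝ :=
  {θ | 0 < θ ∧ (∀ k, 0 ≤ pMod p A θ k) ∧ ∑' k, pMod p A θ k = 1}

/-!
Write `g(x) = ∑ p_k x^k`, `S_A(x) = ∑_{k∈A} p_k x^k` and `T_A(x) = ∑_{k∈A} k p_k x^k`.
For `S_A(θ) > 0` the law `p_{A,θ}` has total mass `1`, and its mean minus `1` has the sign of
`T_A(θ) (θ - g(θ)) - S_A(θ) (θ - θ g'(θ))`. A root can only lie in `(1, ρ]`: for `θ ≤ 1` the
expression is negative since `g(θ) ≥ θ` and `θ g'(θ) < θ`, and beyond `ρ` only the divergence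
of `S_A` could help, which the tangent bound `g(θ) ≤ 1 + (1 - 1/θ) θ g'(θ)` excludes.
On `(1, ρ]`, `T_A / S_A` increases while `ψ(θ) = (θ - θ g'(θ)) / (θ - g(θ))` decreases (as
`u = x - g` is concave with `u(1) = 0`; checked on polynomial truncations), so a root exists iff
`ψ(ρ) ≤ T_A(ρ) / S_A(ρ)`, by the intermediate value theorem on `[1, ρ]`.
-/

open Filter Set Topology

section Monomial

variable {x : ℝ}

lemma pow_sub_one_le_mul (hx : 1 ≤ x) (k : ℕ) : x ^ k - 1 ≤ k * x ^ (k - 1) * (x - 1) := by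
  have h := abs_pow_sub_pow_le x 1 k
  rw [one_pow, abs_of_nonneg (sub_nonneg.2 (one_le_pow₀ hx)), abs_of_nonneg (sub_nonneg.2 hx),
    abs_one, abs_of_nonneg (zero_le_one.trans hx), max_eq_left hx] at h
  linarith

lemma one_sub_pow_add_mul_le (hx : 1 ≤ x) (k : ℕ) :
    1 - x ^ k + (x - 1) * (k * x ^ (k - 1)) ≤ k * (k - 1) * x ^ (k - 2) * (x - 1) ^ 2 / 2 := by
  suffices h : ∀ m : ℕ, 1 - x ^ (m + 2) + (x - 1) * ((m + 2) * x ^ (m + 1))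
      ≤ (m + 2) * (m + 1) * x ^ m * (x - 1) ^ 2 / 2 by
    match k with
    | 0 | 1 => simp
    | m + 2 => convert h m using 2 <;> push_cast <;> ring_nf
  intro m
  induction m with
  | zero => exact le_of_eq (by push_cast; ring)
  | succ m ih =>
    have htan : x ^ (m + 2) - 1 ≤ (m + 2 : ℕ) * x ^ (m + 1) * (x - 1) :=
      pow_sub_one_le_mul hx (m + 2)
    push_cast
    calc _ = x * (1 - x ^ (m + 2) + (x - 1) * ((m + 2) * x ^ (m + 1)))
          + (x - 1) * (x ^ (m + 2) - 1) := by ring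
      _ ≤ x * ((m + 2) * (m + 1) * x ^ m * (x - 1) ^ 2 / 2)
          + (x - 1) * ((m + 2 : ℕ) * x ^ (m + 1) * (x - 1)) := by gcongr
      _ = _ := by push_cast; ring

end Monomial

noncomputable def genFun (c : ℕ → ℝ) (x : ℝ) : ℝ := ∑' k, c k * x ^ k

-- `genFun (sizeBias c) x` is `x g'(x)` for `g = genFun c`.
def sizeBias (c : ℕ → ℝ) (k : ℕ) : ℝ := k * c k

section GenFun

variable {c : ℕ → ℝ} {x r : ℝ}

lemma sizeBias_nonneg (hc : ∀ k, 0 ≤ c k) (k : ℕ) : 0 ≤ sizeBias c k :=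
  mul_nonneg k.cast_nonneg (hc k)

lemma sizeBias_indicator (A : Set ℕ) : sizeBias (A.indicator c) = A.indicator (sizeBias c) :=
  funext fun _ => (Set.indicator_mul_right A _ c).symm

lemma Summable.of_tsum_eq_one {q : ℕ → ℝ} (h : ∑' k, q k = 1) : Summable q := by
  by_contra hq
  rw [tsum_eq_zero_of_not_summable hq] at h
  exact zero_ne_one h

lemma genFun_one (c : ℕ → ℝ) : genFun c 1 = ∑' k, c k := by
  simp [genFun]

lemma summable_genFun_of_le (hc : ∀ k, 0 ≤ c k) (hx : 0 ≤ x) (hxr : x ≤ r)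
    (h : Summable fun k => c k * r ^ k) : Summable fun k => c k * x ^ k :=
  h.of_nonneg_of_le (fun k => mul_nonneg (hc k) (pow_nonneg hx k))
    fun k => mul_le_mul_of_nonneg_left (pow_le_pow_left₀ hx hxr k) (hc k)

lemma Summable.indicator_mul_pow (h : Summable fun k => c k * x ^ k) (A : Set ℕ) :
    Summable fun k => A.indicator c k * x ^ k :=
  (h.indicator A).congr fun _ => Set.indicator_mul_left A c _

lemma genFun_indicator_add_compl (h : Summable fun k => c k * x ^ k) (A : Set ℕ) :
    genFun (A.indicator c) x + genFun (Aᶜ.indicator c) x = genFun c x := by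
  rw [genFun, genFun, genFun, ← (h.indicator_mul_pow A).tsum_add (h.indicator_mul_pow Aᶜ)]
  congr! 2 with k
  rw [← add_mul, ← Pi.add_apply (A.indicator c), Set.indicator_self_add_compl]

lemma genFun_nonneg (hc : ∀ k, 0 ≤ c k) (hx : 0 ≤ x) : 0 ≤ genFun c x :=
  tsum_nonneg fun k => mul_nonneg (hc k) (pow_nonneg hx k)

lemma genFun_pos (hc : ∀ k, 0 ≤ c k) (hpos : 0 < ∑' k, c k) (hx : 0 < x)
    (h : Summable fun k => c k * x ^ k) : 0 < genFun c x := by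
  obtain ⟨k, hk⟩ : ∃ k, 0 < c k := by
    by_contra! hneg
    exact (tsum_nonpos hneg).not_gt hpos
  exact h.tsum_pos (fun k => mul_nonneg (hc k) (pow_nonneg hx.le k)) k (mul_pos hk (pow_pos hx k))

lemma continuousOn_genFun (hc : ∀ k, 0 ≤ c k) (h : Summable fun k => c k * r ^ k) :
    ContinuousOn (genFun c) (Icc 0 r) := by
  refine (tendstoUniformlyOn_tsum h fun k y hy => ?_).continuousOn
    (Eventually.of_forall fun s => ?_).frequently
  · rw [norm_mul, norm_pow, Real.norm_of_nonneg (hc k), Real.norm_of_nonneg hy.1]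
    exact mul_le_mul_of_nonneg_left (pow_le_pow_left₀ hy.1 hy.2 k) (hc k)
  · exact (continuous_finsetSum s fun k _ => continuous_const.mul (continuous_pow k)).continuousOn

lemma genFun_indicator_singleton (c : ℕ → ℝ) (j : ℕ) (x : ℝ) :
    genFun (({j} : Set ℕ).indicator c) x = c j * x ^ j := by
  rw [genFun, tsum_eq_single j fun k hk => by simp [hk]]
  simp

lemma genFun_sizeBias_le (hc : ∀ k, 0 ≤ c k) (hx : 0 < x) (hxr : x ≤ r)
    (h : Summable fun k => sizeBias c k * r ^ k) :
    genFun (sizeBias c) x ≤ x / r * genFun (sizeBias c) r := by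
  have hr : 0 < r := hx.trans_le hxr
  have hterm (k : ℕ) : sizeBias c k * x ^ k ≤ x / r * (sizeBias c k * r ^ k) := by
    rcases k with _ | k
    · simp [sizeBias]
    · have := mul_le_mul_of_nonneg_left (pow_le_pow_left₀ hx.le hxr k)
        (mul_nonneg (sizeBias_nonneg hc (k + 1)) hx.le)
      calc sizeBias c (k + 1) * x ^ (k + 1) = sizeBias c (k + 1) * x * x ^ k := by ring
        _ ≤ sizeBias c (k + 1) * x * r ^ k := this
        _ = x / r * (sizeBias c (k + 1) * r ^ (k + 1)) := by field_simp; ring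
  rw [genFun, genFun, ← tsum_mul_left]
  exact (summable_genFun_of_le (sizeBias_nonneg hc) hx.le hxr h).tsum_le_tsum hterm
    (h.mul_left _)

lemma genFun_le_tsum_add (hc : ∀ k, 0 ≤ c k) (hx : 1 ≤ x) (hs : Summable fun k => c k * x ^ k)
    (hs' : Summable fun k => sizeBias c k * x ^ k) :
    genFun c x ≤ ∑' k, c k + (x - 1) / x * genFun (sizeBias c) x := by
  have hx0 : 0 < x := one_pos.trans_le hx
  have hc1 : Summable c :=
    hs.of_nonneg_of_le hc fun k => le_mul_of_one_le_right (hc k) (one_le_pow₀ hx)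
  have hterm (k : ℕ) : c k * x ^ k ≤ c k + (x - 1) / x * (sizeBias c k * x ^ k) := by
    rcases k with _ | k
    · simp [sizeBias]
    · have := mul_le_mul_of_nonneg_left (pow_sub_one_le_mul hx (k + 1)) (hc (k + 1))
      calc c (k + 1) * x ^ (k + 1)
          ≤ c (k + 1) + c (k + 1) * ((k + 1 : ℕ) * x ^ k * (x - 1)) := by
            simp only [Nat.add_sub_cancel] at this; linarith
        _ = c (k + 1) + (x - 1) / x * (sizeBias c (k + 1) * x ^ (k + 1)) := by
            rw [sizeBias]; field_simp; ring
  rw [genFun, genFun, ← tsum_mul_left, ← hc1.tsum_add (hs'.mul_left _)]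
  exact hs.tsum_le_tsum hterm (hc1.add (hs'.mul_left _))

lemma tsum_add_le_genFun (hc : ∀ k, 0 ≤ c k) (hx : 0 ≤ x) (hc1 : Summable c)
    (hc1' : Summable (sizeBias c)) (hs : Summable fun k => c k * x ^ k) :
    ∑' k, c k + (x - 1) * ∑' k, sizeBias c k ≤ genFun c x := by
  have hterm (k : ℕ) : c k + (x - 1) * sizeBias c k ≤ c k * x ^ k := by
    have := one_add_mul_le_pow (a := x - 1) (by linarith) k
    rw [add_sub_cancel] at this
    rw [sizeBias]
    nlinarith [hc k]
  rw [← tsum_mul_left, ← hc1.tsum_add (hc1'.mul_left _)]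
  exact (hc1.add (hc1'.mul_left _)).tsum_le_tsum hterm hs

lemma genFun_sizeBias_mul_le (hc : ∀ k, 0 ≤ c k) (hx : 0 < x) (hxr : x ≤ r)
    (h : Summable fun k => c k * r ^ k) (h' : Summable fun k => sizeBias c k * r ^ k)
    (hr : 0 < genFun c r) :
    genFun (sizeBias c) x * genFun c r ≤ genFun (sizeBias c) r * genFun c x := by
  have hr0 : 0 < r := hx.trans_le hxr
  set ν := genFun (sizeBias c) r / genFun c r
  set t := x / r
  have ht0 : 0 < t := div_pos hx hr0
  have ht1 : t ≤ 1 := (div_le_one hr0).2 hxr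
  -- `(k - ν) t ^ k ≤ (k - ν) t ^ ⌈ν⌉₊` termwise, and the right side sums to zero at `r`.
  have hterm (k : ℕ) : sizeBias c k * x ^ k - ν * (c k * x ^ k)
      ≤ t ^ ⌈ν⌉₊ * (sizeBias c k * r ^ k - ν * (c k * r ^ k)) := by
    have hpow : ((k : ℝ) - ν) * t ^ k ≤ ((k : ℝ) - ν) * t ^ ⌈ν⌉₊ := by
      rcases le_total (k : ℝ) ν with hk | hk
      · exact mul_le_mul_of_nonpos_left (pow_le_pow_of_le_one ht0.le ht1
          (Nat.cast_le.1 (hk.trans (Nat.le_ceil ν)))) (sub_nonpos.2 hk)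
      · exact mul_le_mul_of_nonneg_left (pow_le_pow_of_le_one ht0.le ht1 (Nat.ceil_le.2 hk))
          (sub_nonneg.2 hk)
    have hx_eq : x = r * t := (mul_div_cancel₀ x hr0.ne').symm
    calc sizeBias c k * x ^ k - ν * (c k * x ^ k) = ((k - ν) * t ^ k) * (c k * r ^ k) := by
          rw [hx_eq, sizeBias]; ring
      _ ≤ ((k - ν) * t ^ ⌈ν⌉₊) * (c k * r ^ k) :=
          mul_le_mul_of_nonneg_right hpow (mul_nonneg (hc k) (pow_nonneg hr0.le k))
      _ = _ := by rw [sizeBias]; ring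
  have hsx := summable_genFun_of_le hc hx.le hxr h
  have hsx' := summable_genFun_of_le (sizeBias_nonneg hc) hx.le hxr h'
  have hsum := (hsx'.sub (hsx.mul_left ν)).tsum_le_tsum hterm ((h'.sub (h.mul_left ν)).mul_left _)
  rw [tsum_mul_left, hsx'.tsum_sub (hsx.mul_left ν), h'.tsum_sub (h.mul_left ν), tsum_mul_left,
    tsum_mul_left] at hsum
  change genFun (sizeBias c) x - ν * genFun c x
    ≤ t ^ ⌈ν⌉₊ * (genFun (sizeBias c) r - ν * genFun c r) at hsum
  rw [div_mul_cancel₀ _ hr.ne', sub_self, mul_zero, sub_nonpos] at hsum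
  calc genFun (sizeBias c) x * genFun c r ≤ ν * genFun c x * genFun c r :=
        mul_le_mul_of_nonneg_right hsum hr.le
    _ = genFun (sizeBias c) r * genFun c x := by
        rw [mul_right_comm, div_mul_cancel₀ _ hr.ne']

end GenFun
section GapRatio

-- `hlow` and `hup` are the Taylor bounds at `1` of a `u` with `u 1 = 0` and `u'' = -w` decreasing;
-- they make the derivative of `x u'(x) / u(x)` nonpositive.
lemma mul_deriv_div_antitone_of_taylor {u v w : ℝ → ℝ} {σ ρ : ℝ} (hσ : 1 < σ) (hσρ : σ ≤ ρ)
    (hu : ∀ x, HasDerivAt u (v x) x) (hv : ∀ x, HasDerivAt v (-w x) x)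
    (hw : ∀ x ∈ Icc σ ρ, 0 ≤ w x) (hv_pos : ∀ x ∈ Icc σ ρ, 0 < v x)
    (hlow : ∀ x ∈ Icc σ ρ, (x - 1) * v x ≤ u x)
    (hup : ∀ x ∈ Icc σ ρ, u x ≤ (x - 1) * v x + (x - 1) ^ 2 * w x / 2) :
    ρ * v ρ * u σ ≤ σ * v σ * u ρ := by
  have hu_pos (x) (hx : x ∈ Icc σ ρ) : 0 < u x :=
    (mul_pos (by linarith [hx.1]) (hv_pos x hx)).trans_le (hlow x hx)
  have hderiv (x) (hx : x ∈ Icc σ ρ) : HasDerivAt (fun x => x * v x / u x)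
      (((1 * v x + x * -w x) * u x - x * v x * v x) / u x ^ 2) x :=
    ((hasDerivAt_id x).mul (hv x)).div (hu x) (hu_pos x hx).ne'
  have hσ_mem : σ ∈ Icc σ ρ := ⟨le_rfl, hσρ⟩
  have hρ_mem : ρ ∈ Icc σ ρ := ⟨hσρ, le_rfl⟩
  rw [← div_le_div_iff₀ (hu_pos ρ hρ_mem) (hu_pos σ hσ_mem)]
  refine antitoneOn_of_deriv_nonpos (convex_Icc σ ρ)
    (fun x hx => (hderiv x hx).continuousAt.continuousWithinAt)
    (fun x hx => (hderiv x (interior_subset hx)).differentiableAt.differentiableWithinAt)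
    (fun x hx => ?_) hσ_mem hρ_mem hσρ
  have hx' := interior_subset hx
  rw [(hderiv x hx').deriv]
  refine div_nonpos_of_nonpos_of_nonneg ?_ (sq_nonneg _)
  have hx1 : 0 < x - 1 := by linarith [hx'.1]
  have hv := hv_pos x hx'
  have hw := hw x hx'
  have h1 := mul_le_mul_of_nonneg_left (hup x hx') hv.le
  have h2 := mul_le_mul_of_nonneg_left (hlow x hx') (mul_nonneg (by linarith) hw : 0 ≤ x * w x)
  nlinarith [mul_nonneg (mul_nonneg (mul_nonneg hx1.le (by linarith : 0 ≤ x + 1)) hw) hv.le]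

lemma hasDerivAt_natCast_mul_pow_pred (k : ℕ) (x : ℝ) :
    HasDerivAt (fun x => (k : ℝ) * x ^ (k - 1)) (k * (k - 1) * x ^ (k - 2)) x := by
  rcases k with _ | k
  · simpa using hasDerivAt_const x (0 : ℝ)
  · rw [Nat.add_sub_cancel, Nat.cast_succ, add_sub_cancel_right, mul_assoc,
      show k + 1 - 2 = k - 1 by omega]
    exact (hasDerivAt_pow k x).const_mul _

lemma mul_sum_one_sub_mul_pow_pred (q : ℕ → ℝ) (s : Finset ℕ) (x : ℝ) :
    x * ∑ k ∈ s, q k * (1 - k * x ^ (k - 1)) = ∑ k ∈ s, q k * (x - k * x ^ k) := by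
  rw [Finset.mul_sum]
  refine Finset.sum_congr rfl fun k _ => ?_
  rcases k with _ | k
  · simp [mul_comm]
  · simp only [Nat.add_sub_cancel, pow_succ]; ring

lemma sum_gap_ratio_le {q : ℕ → ℝ} (hq : ∀ k, 0 ≤ q k) (s : Finset ℕ) {σ ρ : ℝ} (hσ : 1 < σ)
    (hσρ : σ ≤ ρ) (hρ : 0 < ∑ k ∈ s, q k * (ρ - k * ρ ^ k)) :
    (∑ k ∈ s, q k * (ρ - k * ρ ^ k)) * ∑ k ∈ s, q k * (σ - σ ^ k)
      ≤ (∑ k ∈ s, q k * (σ - k * σ ^ k)) * ∑ k ∈ s, q k * (ρ - ρ ^ k) := by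
  set v : ℝ → ℝ := fun x => ∑ k ∈ s, q k * (1 - k * x ^ (k - 1))
  set w : ℝ → ℝ := fun x => ∑ k ∈ s, q k * (k * (k - 1) * x ^ (k - 2))
  have hv_ρ : 0 < v ρ := by
    refine pos_of_mul_pos_right ?_ (by linarith : (0 : ℝ) ≤ ρ)
    rwa [mul_sum_one_sub_mul_pow_pred]
  have hv_anti (x) (hx : x ∈ Icc σ ρ) : v ρ ≤ v x := by
    refine Finset.sum_le_sum fun k _ => mul_le_mul_of_nonneg_left ?_ (hq k)
    gcongr
    exacts [by linarith [hx.1], hx.2]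
  have hw (x) (hx : x ∈ Icc σ ρ) : 0 ≤ w x := by
    refine Finset.sum_nonneg fun k _ => mul_nonneg (hq k) (mul_nonneg ?_ ?_)
    · rcases k.eq_zero_or_pos with rfl | hk
      · simp
      · exact mul_nonneg k.cast_nonneg (sub_nonneg.2 (Nat.one_le_cast.2 hk))
    · exact pow_nonneg (by linarith [hx.1]) _
  have h := mul_deriv_div_antitone_of_taylor (u := fun x => ∑ k ∈ s, q k * (x - x ^ k)) (v := v)
    (w := w) hσ hσρ
    (fun x => HasDerivAt.fun_sum fun k _ =>
      ((hasDerivAt_id x).sub (hasDerivAt_pow k x)).const_mul _)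
    (fun x => by
      simpa [w, ← Finset.sum_neg_distrib] using HasDerivAt.fun_sum fun k _ =>
        ((hasDerivAt_natCast_mul_pow_pred k x).const_sub 1).const_mul (q k))
    hw (fun x hx => hv_ρ.trans_le (hv_anti x hx))
    (fun x hx => by
      rw [Finset.mul_sum]
      refine Finset.sum_le_sum fun k _ => ?_
      have := pow_sub_one_le_mul (by linarith [hx.1] : 1 ≤ x) k
      linarith [mul_le_mul_of_nonneg_left this (hq k)])
    (fun x hx => by
      rw [Finset.mul_sum, Finset.mul_sum, Finset.sum_div, ← Finset.sum_add_distrib]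
      refine Finset.sum_le_sum fun k _ => ?_
      have := one_sub_pow_add_mul_le (by linarith [hx.1] : 1 ≤ x) k
      linarith [mul_le_mul_of_nonneg_left this (hq k)])
  simpa only [v, mul_sum_one_sub_mul_pow_pred] using h

lemma gap_ratio_le {q : ℕ → ℝ} (hq : ∀ k, 0 ≤ q k) (hq1 : ∑' k, q k = 1) {σ ρ : ℝ} (hσ : 1 < σ)
    (hσρ : σ ≤ ρ) (hg : Summable fun k => q k * ρ ^ k)
    (hg' : Summable fun k => sizeBias q k * ρ ^ k) (hρ : genFun (sizeBias q) ρ < ρ) :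
    (ρ - genFun (sizeBias q) ρ) * (σ - genFun q σ)
      ≤ (σ - genFun (sizeBias q) σ) * (ρ - genFun q ρ) := by
  have hlim {c : ℕ → ℝ} {x : ℝ} (hc : Summable fun k => c k * x ^ k) {f : ℕ → ℝ}
      (hf : ∀ k, q k * x - c k * x ^ k = f k) :
      Tendsto (fun n => ∑ k ∈ Finset.range n, f k) atTop (𝓝 (x - genFun c x)) := by
    have h := ((Summable.of_tsum_eq_one hq1).hasSum.mul_right x).sub hc.hasSum
    rw [hq1, one_mul, funext hf] at h
    exact h.tendsto_sum_nat
  have hu (x) (hx : x ∈ Icc 0 ρ) := hlim (summable_genFun_of_le hq hx.1 hx.2 hg)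
    (f := fun k => q k * (x - x ^ k)) fun k => by ring
  have hv (x) (hx : x ∈ Icc 0 ρ) := hlim (summable_genFun_of_le (sizeBias_nonneg hq) hx.1 hx.2 hg')
    (f := fun k => q k * (x - k * x ^ k)) fun k => by rw [sizeBias]; ring
  have hσ_mem : σ ∈ Icc 0 ρ := ⟨by linarith, hσρ⟩
  have hρ_mem : ρ ∈ Icc 0 ρ := ⟨by linarith, le_rfl⟩
  refine le_of_tendsto_of_tendsto (((hv ρ hρ_mem).mul (hu σ hσ_mem)))
    ((hv σ hσ_mem).mul (hu ρ hρ_mem)) ?_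
  filter_upwards [(hv ρ hρ_mem).eventually (eventually_gt_nhds (sub_pos.2 hρ))] with n hn
  exact sum_gap_ratio_le hq _ hσ hσρ hn

end GapRatio

section Bridge

variable (c : ℕ → ℝ) (A : Set ℕ) (x : ℝ)

lemma tsum_indicator_pow_mul :
    ∑' k, A.indicator (fun k => x ^ k * c k) k = genFun (A.indicator c) x :=
  tsum_congr fun k => by rw [Set.indicator_mul_right, mul_comm]

lemma tsum_indicator_natCast_mul_pow_mul :
    ∑' k : ℕ, A.indicator (fun k => (k : ℝ) * x ^ k * c k) k
      = genFun (sizeBias (A.indicator c)) x := by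
  rw [sizeBias_indicator]
  refine tsum_congr fun k => ?_
  by_cases hk : k ∈ A <;> simp [hk, sizeBias, mul_right_comm]

lemma mul_natCast_mul_pow_pred (k : ℕ) :
    x * ((k : ℝ) * c k * x ^ (k - 1)) = sizeBias c k * x ^ k := by
  rcases k with _ | k
  · simp [sizeBias]
  · rw [sizeBias, Nat.add_sub_cancel, pow_succ]; ring

lemma mul_tsum_natCast_mul_pow_pred :
    x * ∑' k : ℕ, (k : ℝ) * c k * x ^ (k - 1) = genFun (sizeBias c) x := by
  rw [← tsum_mul_left]
  exact tsum_congr (mul_natCast_mul_pow_pred c x)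

end Bridge

section Modified

variable {p : ℕ → ℝ} {A : Set ℕ} {θ : ℝ}

lemma cA_eq (p : ℕ → ℝ) (A : Set ℕ) (θ : ℝ) :
    cA p A θ = (θ - genFun (Aᶜ.indicator p) θ) / (θ * genFun (A.indicator p) θ) := by
  rw [cA, tsum_indicator_pow_mul, tsum_indicator_pow_mul]

lemma pMod_eq (hθ : θ ≠ 0) (k : ℕ) :
    pMod p A θ k = cA p A θ * (A.indicator p k * θ ^ k) + Aᶜ.indicator p k * θ ^ k / θ := by
  by_cases hk : k ∈ A
  · simp [pMod, hk, mul_left_comm, mul_comm]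
  · simp [pMod, hk, zpow_sub₀ hθ, div_eq_mul_inv, mul_comm, mul_assoc]

-- `mean (p_{A,θ}) - 1 = meanExcess p A θ / (θ S_A(θ))` by `hasSum_sizeBias_pMod`.
noncomputable def meanExcess (p : ℕ → ℝ) (A : Set ℕ) (x : ℝ) : ℝ :=
  genFun (sizeBias (A.indicator p)) x * (x - genFun p x)
    - genFun (A.indicator p) x * (x - genFun (sizeBias p) x)

lemma hasSum_pMod (hθ : θ ≠ 0) (hS : genFun (A.indicator p) θ ≠ 0)
    (hg : Summable fun k => p k * θ ^ k) : HasSum (pMod p A θ) 1 := by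
  have h : HasSum (fun k => cA p A θ * (A.indicator p k * θ ^ k) + Aᶜ.indicator p k * θ ^ k / θ)
      (cA p A θ * genFun (A.indicator p) θ + genFun (Aᶜ.indicator p) θ / θ) :=
    ((hg.indicator_mul_pow A).hasSum.mul_left _).add ((hg.indicator_mul_pow Aᶜ).hasSum.div_const θ)
  convert h.congr_fun (pMod_eq hθ) using 1
  rw [cA_eq]
  field_simp
  ring

lemma hasSum_sizeBias_pMod (hθ : θ ≠ 0) (hS : genFun (A.indicator p) θ ≠ 0)
    (hg : Summable fun k => p k * θ ^ k) (hg' : Summable fun k => sizeBias p k * θ ^ k) :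
    HasSum (sizeBias (pMod p A θ))
      (1 + meanExcess p A θ / (θ * genFun (A.indicator p) θ)) := by
  have h : HasSum (fun k => cA p A θ * (A.indicator (sizeBias p) k * θ ^ k)
        + Aᶜ.indicator (sizeBias p) k * θ ^ k / θ)
      (cA p A θ * genFun (A.indicator (sizeBias p)) θ + genFun (Aᶜ.indicator (sizeBias p)) θ / θ) :=
    ((hg'.indicator_mul_pow A).hasSum.mul_left _).add
      ((hg'.indicator_mul_pow Aᶜ).hasSum.div_const θ)
  have hS_compl := genFun_indicator_add_compl hg A
  have hT_compl := genFun_indicator_add_compl hg' A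
  convert h.congr_fun fun k => ?_ using 1
  · rw [cA_eq, meanExcess, sizeBias_indicator, ← hS_compl, ← hT_compl]
    field_simp
    ring
  · simp only [← sizeBias_indicator, sizeBias, pMod_eq hθ]
    ring

lemma meanExcess_eq_zero_of_tsum_eq_one (hθ : 0 < θ) (hS : 0 < genFun (A.indicator p) θ)
    (hg : Summable fun k => p k * θ ^ k) (hg' : Summable fun k => sizeBias p k * θ ^ k)
    (hM : ∑' k, sizeBias (pMod p A θ) k = 1) : meanExcess p A θ = 0 := by
  have h := (hasSum_sizeBias_pMod hθ.ne' hS.ne' hg hg').tsum_eq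
  rw [hM, left_eq_add, div_eq_zero_iff] at h
  exact h.resolve_right (mul_pos hθ hS).ne'

lemma continuousOn_meanExcess {ρ : ℝ} (hp : ∀ k, 0 ≤ p k) (hg : Summable fun k => p k * ρ ^ k)
    (hg' : Summable fun k => sizeBias p k * ρ ^ k) (A : Set ℕ) :
    ContinuousOn (meanExcess p A) (Icc 0 ρ) := by
  have hpA := Set.indicator_nonneg (s := A) fun k _ => hp k
  have hS := continuousOn_genFun hpA (hg.indicator_mul_pow A)
  have hT := continuousOn_genFun (sizeBias_nonneg hpA)
    (sizeBias_indicator A ▸ hg'.indicator_mul_pow A)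
  have hG := continuousOn_genFun hp hg
  have hG1 := continuousOn_genFun (sizeBias_nonneg hp) hg'
  exact (hT.mul (continuousOn_id.sub hG)).sub (hS.mul (continuousOn_id.sub hG1))

end Modified

section Criterion

variable {p : ℕ → ℝ} {A : Set ℕ} {θ ρ : ℝ}

lemma genFun_lt_self (hp : ∀ k, 0 ≤ p k) (hpsum : ∑' k, p k = 1) (hθ : 1 < θ) (hθρ : θ ≤ ρ)
    (hg : Summable fun k => p k * ρ ^ k) (hg' : Summable fun k => sizeBias p k * ρ ^ k)
    (hG1 : genFun (sizeBias p) ρ < ρ) : genFun p θ < θ := by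
  have hθ0 : 0 < θ := one_pos.trans hθ
  have hρ0 : 0 < ρ := hθ0.trans_le hθρ
  have hc : 0 < (θ - 1) / θ := div_pos (by linarith) hθ0
  calc genFun p θ ≤ 1 + (θ - 1) / θ * genFun (sizeBias p) θ := by
        simpa only [hpsum] using genFun_le_tsum_add hp hθ.le
          (summable_genFun_of_le hp hθ0.le hθρ hg)
          (summable_genFun_of_le (sizeBias_nonneg hp) hθ0.le hθρ hg')
    _ ≤ 1 + (θ - 1) / θ * (θ / ρ * genFun (sizeBias p) ρ) := by
        gcongr; exact genFun_sizeBias_le hp hθ0 hθρ hg'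
    _ < 1 + (θ - 1) / θ * θ := by
        gcongr
        rw [div_mul_eq_mul_div, div_lt_iff₀ hρ0]
        exact mul_lt_mul_of_pos_left hG1 hθ0
    _ = θ := by field_simp; ring

lemma meanExcess_neg (hp : ∀ k, 0 ≤ p k) (hpsum : ∑' k, p k = 1) (hμ : ∑' k, sizeBias p k < 1)
    (hμs : Summable (sizeBias p)) (hA : 0 < ∑' k, A.indicator p k) (hθ : 0 < θ) (hθ1 : θ ≤ 1) :
    meanExcess p A θ < 0 := by
  have hps := Summable.of_tsum_eq_one hpsum
  have hs := summable_genFun_of_le hp hθ.le hθ1 (by simpa using hps)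
  have hG : θ ≤ genFun p θ := by
    have := tsum_add_le_genFun hp hθ.le hps hμs hs
    rw [hpsum] at this
    nlinarith [mul_nonneg (sub_nonneg.2 hθ1) (sub_nonneg.2 hμ.le)]
  have hG1 : genFun (sizeBias p) θ < θ := by
    have := genFun_sizeBias_le hp hθ hθ1 (by simpa using hμs)
    rw [genFun_one, div_one] at this
    exact this.trans_lt (mul_lt_of_lt_one_right hθ hμ)
  have hpA := Set.indicator_nonneg (s := A) fun k _ => hp k
  have hS := genFun_pos hpA hA hθ (hs.indicator_mul_pow A)
  have hT := genFun_nonneg (sizeBias_nonneg hpA) hθ.le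
  rw [meanExcess]
  nlinarith [mul_nonneg hT (sub_nonneg.2 hG), mul_pos hS (sub_pos.2 hG1)]

/-- If `∑_{k∈A} p_k θ^k` diverged, `cA` would take the junk value `0`, so `p_{A,θ}` would be
`p_k θ^(k-1)` on `Aᶜ` only; the tangent bound shows that such a law cannot have mean `1`. -/
lemma summable_indicator_of_mem_IA (hp : ∀ k, 0 ≤ p k) (hpsum : ∑' k, p k = 1)
    (hA : 0 < ∑' k, A.indicator p k) (hθ1 : 1 ≤ θ) (hθ : θ ∈ IA p A)
    (hM : ∑' k, sizeBias (pMod p A θ) k = 1) : Summable fun k => A.indicator p k * θ ^ k := by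
  by_contra hns
  have hθ0 : θ ≠ 0 := hθ.1.ne'
  have hS : genFun (A.indicator p) θ = 0 := tsum_eq_zero_of_not_summable hns
  have hpMod (k : ℕ) : pMod p A θ k = Aᶜ.indicator p k * θ ^ k / θ := by
    rw [pMod_eq hθ0, cA_eq, hS, mul_zero, div_zero, zero_mul, zero_add]
  have hasSum_of_tsum {f g : ℕ → ℝ} (hf : ∑' k, f k = 1) (hfg : ∀ k, f k = g k / θ) :
      HasSum g θ := by
    have h := (Summable.of_tsum_eq_one hf).hasSum.mul_right θ
    rw [hf, one_mul] at h
    exact h.congr_fun fun k => by rw [hfg, div_mul_cancel₀ _ hθ0]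
  have hS_compl := hasSum_of_tsum hθ.2.2 hpMod
  have hT_compl := hasSum_of_tsum (g := fun k => sizeBias (Aᶜ.indicator p) k * θ ^ k) hM
    fun k => by rw [sizeBias, sizeBias, hpMod]; ring
  have hpAc := Set.indicator_nonneg (s := Aᶜ) fun k _ => hp k
  have htangent := genFun_le_tsum_add hpAc hθ1 hS_compl.summable hT_compl.summable
  rw [genFun, genFun, hS_compl.tsum_eq, hT_compl.tsum_eq, div_mul_cancel₀ _ hθ0] at htangent
  have hsplit :=
    genFun_indicator_add_compl (x := 1) (by simpa using Summable.of_tsum_eq_one hpsum) A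
  rw [genFun_one, genFun_one, genFun_one, hpsum] at hsplit
  linarith

lemma le_radius_of_mem_IA (hp : ∀ k, 0 ≤ p k) (hpsum : ∑' k, p k = 1)
    (hA : 0 < ∑' k, A.indicator p k) (hρ : 1 ≤ ρ)
    (hrad : ∀ r, ρ < r → ¬ Summable fun k => p k * r ^ k) (hθ : θ ∈ IA p A)
    (hM : ∑' k, sizeBias (pMod p A θ) k = 1) : θ ≤ ρ := by
  by_contra! hρθ
  have hθ0 : θ ≠ 0 := hθ.1.ne'
  have hcompl : Summable fun k => Aᶜ.indicator p k * θ ^ k :=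
    ((Summable.of_tsum_eq_one hθ.2.2).mul_left θ).indicator Aᶜ |>.congr fun k => by
      by_cases hk : k ∈ A
      · simp [hk]
      · simp [hk, pMod_eq hθ0, mul_div_cancel₀ _ hθ0]
  refine hrad θ hρθ <| (summable_indicator_of_mem_IA hp hpsum hA (by linarith) hθ hM).add hcompl
    |>.congr fun k => ?_
  rw [← add_mul, ← Pi.add_apply (A.indicator p), Set.indicator_self_add_compl]

lemma threshold_le_of_mem_IA (hp : ∀ k, 0 ≤ p k) (hpsum : ∑' k, p k = 1)
    (hμ : ∑' k, sizeBias p k < 1) (hμs : Summable (sizeBias p)) (hρ : 1 < ρ)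
    (hrad : ∀ r, ρ < r → ¬ Summable fun k => p k * r ^ k) (hg : Summable fun k => p k * ρ ^ k)
    (hg' : Summable fun k => sizeBias p k * ρ ^ k) (hG1 : genFun (sizeBias p) ρ < ρ)
    (hA : 0 < ∑' k, A.indicator p k) (hθ : θ ∈ IA p A) (hM : ∑' k, sizeBias (pMod p A θ) k = 1) :
    (ρ - genFun (sizeBias p) ρ) / (ρ - genFun p ρ)
      ≤ genFun (sizeBias (A.indicator p)) ρ / genFun (A.indicator p) ρ := by
  have hθρ := le_radius_of_mem_IA hp hpsum hA hρ.le hrad hθ hM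
  have hθ0 : 0 < θ := hθ.1
  have hs := summable_genFun_of_le hp hθ0.le hθρ hg
  have hs' := summable_genFun_of_le (sizeBias_nonneg hp) hθ0.le hθρ hg'
  have hpA := Set.indicator_nonneg (s := A) fun k _ => hp k
  have hSθ := genFun_pos hpA hA hθ0 (hs.indicator_mul_pow A)
  have hSρ := genFun_pos hpA hA (by linarith) (hg.indicator_mul_pow A)
  have hE := meanExcess_eq_zero_of_tsum_eq_one hθ0 hSθ hs hs' hM
  have hθ1 : 1 < θ := by
    by_contra! h
    exact (meanExcess_neg hp hpsum hμ hμs hA hθ0 h).ne hE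
  have hGθ := genFun_lt_self hp hpsum hθ1 hθρ hg hg' hG1
  have hGρ := genFun_lt_self hp hpsum hρ le_rfl hg hg' hG1
  have hgap := gap_ratio_le hp hpsum hθ1 hθρ hg hg' hG1
  have hratio := genFun_sizeBias_mul_le hpA hθ0 hθρ (hg.indicator_mul_pow A)
    (sizeBias_indicator A ▸ hg'.indicator_mul_pow A) hSρ
  -- `ψ(ρ) ≤ ψ(θ) = T_A(θ) / S_A(θ) ≤ T_A(ρ) / S_A(ρ)`, cleared of denominators.
  rw [meanExcess] at hE
  rw [div_le_div_iff₀ (sub_pos.2 hGρ) hSρ]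
  refine le_of_mul_le_mul_right ?_ (mul_pos (sub_pos.2 hGθ) hSθ)
  calc (ρ - genFun (sizeBias p) ρ) * genFun (A.indicator p) ρ
        * ((θ - genFun p θ) * genFun (A.indicator p) θ)
      = (ρ - genFun (sizeBias p) ρ) * (θ - genFun p θ)
        * (genFun (A.indicator p) ρ * genFun (A.indicator p) θ) := by ring
    _ ≤ (θ - genFun (sizeBias p) θ) * (ρ - genFun p ρ)
        * (genFun (A.indicator p) ρ * genFun (A.indicator p) θ) :=
        mul_le_mul_of_nonneg_right hgap (by positivity)
    _ = (ρ - genFun p ρ) * (θ - genFun p θ)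
        * (genFun (sizeBias (A.indicator p)) θ * genFun (A.indicator p) ρ) := by
        linear_combination (-(ρ - genFun p ρ) * genFun (A.indicator p) ρ) * hE
    _ ≤ (ρ - genFun p ρ) * (θ - genFun p θ)
        * (genFun (sizeBias (A.indicator p)) ρ * genFun (A.indicator p) θ) :=
        mul_le_mul_of_nonneg_left hratio (mul_nonneg (by linarith) (by linarith))
    _ = _ := by ring

lemma exists_mem_IA_of_threshold_le (hp : ∀ k, 0 ≤ p k) (hpsum : ∑' k, p k = 1)
    (hμ : ∑' k, sizeBias p k < 1) (hμs : Summable (sizeBias p)) (hρ : 1 < ρ)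
    (hg : Summable fun k => p k * ρ ^ k) (hg' : Summable fun k => sizeBias p k * ρ ^ k)
    (hG1 : genFun (sizeBias p) ρ < ρ) (hA : 0 < ∑' k, A.indicator p k)
    (h : (ρ - genFun (sizeBias p) ρ) / (ρ - genFun p ρ)
      ≤ genFun (sizeBias (A.indicator p)) ρ / genFun (A.indicator p) ρ) :
    ∃ θ ∈ IA p A, ∑' k, sizeBias (pMod p A θ) k = 1 := by
  have hpA := Set.indicator_nonneg (s := A) fun k _ => hp k
  have hcont := (continuousOn_meanExcess hp hg hg' A).mono (Icc_subset_Icc_left zero_le_one)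
  have h1 := meanExcess_neg hp hpsum hμ hμs hA one_pos le_rfl
  have hρ0 : 0 ≤ meanExcess p A ρ := by
    rw [div_le_div_iff₀ (sub_pos.2 (genFun_lt_self hp hpsum hρ le_rfl hg hg' hG1))
      (genFun_pos hpA hA (by linarith) (hg.indicator_mul_pow A))] at h
    rw [meanExcess]
    linarith
  obtain ⟨θ, hθ_mem, hθ⟩ := intermediate_value_Icc hρ.le hcont ⟨h1.le, hρ0⟩
  have hθ1 : 1 < θ := hθ_mem.1.lt_of_ne (by rintro rfl; exact h1.ne hθ)
  have hθ0 : 0 < θ := one_pos.trans hθ1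
  have hs := summable_genFun_of_le hp hθ0.le hθ_mem.2 hg
  have hs' := summable_genFun_of_le (sizeBias_nonneg hp) hθ0.le hθ_mem.2 hg'
  have hSθ := genFun_pos hpA hA hθ0 (hs.indicator_mul_pow A)
  have hcA : 0 ≤ cA p A θ := by
    have hGθ := genFun_lt_self hp hpsum hθ1 hθ_mem.2 hg hg' hG1
    have hsplit := genFun_indicator_add_compl hs A
    rw [cA_eq]
    exact div_nonneg (by linarith) (by positivity)
  have hpAc := Set.indicator_nonneg (s := Aᶜ) fun k _ => hp k
  refine ⟨θ, ⟨hθ0, fun k => ?_, (hasSum_pMod hθ0.ne' hSθ.ne' hs).tsum_eq⟩, ?_⟩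
  · rw [pMod_eq hθ0.ne']
    exact add_nonneg (mul_nonneg hcA (mul_nonneg (hpA k) (pow_nonneg hθ0.le k)))
      (div_nonneg (mul_nonneg (hpAc k) (pow_nonneg hθ0.le k)) hθ0.le)
  · rw [(hasSum_sizeBias_pMod hθ0.ne' hSθ.ne' hs hs').tsum_eq, hθ, zero_div, add_zero]

lemma exists_mean_eq_one_iff (hp : ∀ k, 0 ≤ p k)
    (hpsum : ∑' k, p k = 1) (hμ : ∑' k, sizeBias p k < 1) (hμs : Summable (sizeBias p))
    (hρ : 1 < ρ) (hrad : ∀ r, ρ < r → ¬ Summable fun k => p k * r ^ k)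
    (hg : Summable fun k => p k * ρ ^ k) (hg' : Summable fun k => sizeBias p k * ρ ^ k)
    (hG1 : genFun (sizeBias p) ρ < ρ) (hA : 0 < ∑' k, A.indicator p k) :
    (∃ θ ∈ IA p A, ∑' k, sizeBias (pMod p A θ) k = 1)
      ↔ (ρ - genFun (sizeBias p) ρ) / (ρ - genFun p ρ)
        ≤ genFun (sizeBias (A.indicator p)) ρ / genFun (A.indicator p) ρ :=
  ⟨fun ⟨_, hθ, hM⟩ => threshold_le_of_mem_IA hp hpsum hμ hμs hρ hrad hg hg' hG1 hA hθ hM,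
    exists_mem_IA_of_threshold_le hp hpsum hμ hμs hρ hg hg' hG1 hA⟩

end Criterion

theorem stmt7_general (p : ℕ → ℝ) (ρ : ℝ)
    (hp : ∀ k, 0 ≤ p k) (hpsum : ∑' k, p k = 1)
    (hp0 : 0 < p 0)
    (hsub : ∑' k : ℕ, (k : ℝ) * p k < 1)
    (hρ1 : 1 < ρ)
    -- `ρ` is the (finite) radius of convergence of the generating function `g`
    (hrad : (∀ r : ℝ, 0 ≤ r → r < ρ → Summable (fun k : ℕ => p k * r ^ k))
      ∧ (∀ r : ℝ, ρ < r → ¬ Summable (fun k : ℕ => p k * r ^ k)))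
    (hgρ : Summable (fun k : ℕ => p k * ρ ^ k))
    (hg'sum : Summable (fun k : ℕ => (k : ℝ) * p k * ρ ^ (k - 1)))
    (hg' : ∑' k : ℕ, (k : ℝ) * p k * ρ ^ (k - 1) < 1) :
    -- non-genericity criterion via `Y` of law `p_{ℕ,ρ}`:
    (∀ A : Set ℕ, 0 < (∑' k : ℕ, A.indicator p k) →
      ((¬ ∃ θ ∈ IA p A, (∑' k : ℕ, (k : ℝ) * pMod p A θ k) = 1)
        ↔ (∑' k : ℕ, A.indicator (fun k => (k : ℝ) * ρ ^ k * p k) k)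
            / (∑' k : ℕ, A.indicator (fun k => ρ ^ k * p k) k)
          < (ρ - ρ * ∑' k : ℕ, (k : ℝ) * p k * ρ ^ (k - 1))
            / (ρ - ∑' k : ℕ, p k * ρ ^ k)))
    -- `p` is non-generic for `{0}`
    ∧ (¬ ∃ θ ∈ IA p {0}, (∑' k : ℕ, (k : ℝ) * pMod p {0} θ k) = 1)
    -- `p` is generic for `{k}` when `p(k) > 0` and `k/ρ` is at least the threshold
    ∧ (∀ k : ℕ, 0 < p k →
        (ρ - ρ * ∑' j : ℕ, (j : ℝ) * p j * ρ ^ (j - 1)) / (ρ - ∑' j : ℕ, p j * ρ ^ j)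
          ≤ (k : ℝ) / ρ →
        ∃ θ ∈ IA p {k}, (∑' j : ℕ, (j : ℝ) * pMod p {k} θ j) = 1) := by
  have hg'ρ : Summable fun k => sizeBias p k * ρ ^ k :=
    (hg'sum.mul_left ρ).congr (mul_natCast_mul_pow_pred p ρ)
  have hG1 : genFun (sizeBias p) ρ < ρ := by
    rw [← mul_tsum_natCast_mul_pow_pred]
    exact mul_lt_of_lt_one_right (by linarith) hg'
  have hμs : Summable (sizeBias p) := by
    simpa using summable_genFun_of_le (sizeBias_nonneg hp) zero_le_one hρ1.le hg'ρ
  have key {A : Set ℕ} (hA : 0 < ∑' k, A.indicator p k) :=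
    exists_mean_eq_one_iff hp hpsum hsub hμs hρ1 hrad.2 hgρ hg'ρ hG1 hA
  have hthreshold : 0 < (ρ - genFun (sizeBias p) ρ) / (ρ - genFun p ρ) :=
    div_pos (sub_pos.2 hG1) (sub_pos.2 (genFun_lt_self hp hpsum hρ1 le_rfl hgρ hg'ρ hG1))
  simp only [mul_tsum_natCast_mul_pow_pred, tsum_indicator_natCast_mul_pow_mul,
    tsum_indicator_pow_mul]
  refine ⟨fun A hA => ?_, fun hex => ?_, fun k hk hk_ge => ?_⟩
  · rw [← not_le]
    exact not_congr (key hA)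
  · have h := (key (by simpa using hp0)).1 hex
    rw [sizeBias_indicator, genFun_indicator_singleton, sizeBias, Nat.cast_zero, zero_mul,
      zero_mul, zero_div] at h
    linarith
  · refine (key (by simpa using hk)).2 ?_
    rw [sizeBias_indicator, genFun_indicator_singleton, genFun_indicator_singleton, sizeBias,
      mul_assoc, mul_div_cancel_right₀ _ (by positivity)]
    exact hk_ge.trans (div_le_self k.cast_nonneg hρ1.le)

theorem stmt7 (p : ℕ → ℝ) (ρ : ℝ)
    (hp : ∀ k, 0 ≤ p k) (hpsum : ∑' k, p k = 1)
    (hp0 : 0 < p 0) (hp01 : p 0 + p 1 < 1)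
    (hmean : Summable (fun k : ℕ => (k : ℝ) * p k))
    (hsub : ∑' k : ℕ, (k : ℝ) * p k < 1)
    (hρ1 : 1 < ρ)
    -- `ρ` is the (finite) radius of convergence of the generating function `g`
    (hrad : (∀ r : ℝ, 0 ≤ r → r < ρ → Summable (fun k : ℕ => p k * r ^ k))
      ∧ (∀ r : ℝ, ρ < r → ¬ Summable (fun k : ℕ => p k * r ^ k)))
    (hgρ : Summable (fun k : ℕ => p k * ρ ^ k))
    (hg'sum : Summable (fun k : ℕ => (k : ℝ) * p k * ρ ^ (k - 1)))
    (hg' : ∑' k : ℕ, (k : ℝ) * p k * ρ ^ (k - 1) < 1) :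
    -- non-genericity criterion via `Y` of law `p_{ℕ,ρ}`:
    (∀ A : Set ℕ, 0 < (∑' k : ℕ, A.indicator p k) →
      ((¬ ∃ θ ∈ IA p A, (∑' k : ℕ, (k : ℝ) * pMod p A θ k) = 1)
        ↔ (∑' k : ℕ, A.indicator (fun k => (k : ℝ) * ρ ^ k * p k) k)
            / (∑' k : ℕ, A.indicator (fun k => ρ ^ k * p k) k)
          < (ρ - ρ * ∑' k : ℕ, (k : ℝ) * p k * ρ ^ (k - 1))
            / (ρ - ∑' k : ℕ, p k * ρ ^ k)))
    -- `p` is non-generic for `{0}`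
    ∧ (¬ ∃ θ ∈ IA p {0}, (∑' k : ℕ, (k : ℝ) * pMod p {0} θ k) = 1)
    -- `p` is generic for `{k}` when `p(k) > 0` and `k/ρ` is at least the threshold
    ∧ (∀ k : ℕ, 0 < p k →
        (ρ - ρ * ∑' j : ℕ, (j : ℝ) * p j * ρ ^ (j - 1)) / (ρ - ∑' j : ℕ, p j * ρ ^ j)
          ≤ (k : ℝ) / ρ →
        ∃ θ ∈ IA p {k}, (∑' j : ℕ, (j : ℝ) * pMod p {k} θ j) = 1) :=
  stmt7_general p ρ hp hpsum hp0 hsub hρ1 hrad hgρ hg'sum hg'
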